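/- Let à be a nonnegative square matrix indexed by a finite set, N a positive integer such that every entry of Ã^N is at least ε > 0, and write S_M = ∑_{c,d} (Ã^M)_{c,d}. Then for any positive integers M and k, (ε S_M)^k ≤ S_{k(M+N)} ≤ (S_{M+N})^k. -/
import Mathlib


/-- For a nonnegative square matrix `Ã` with all entries of `Ã^N` at least `ε > 0`, writing
`S_M = ∑_{c,d} (Ã^M)_{c,d}`, we have `(ε S_M)^k ≤ S_{k(M+N)} ≤ (S_{M+N})^k`. -/
theorem stmt12 {ι : Type*} [Fintype ι] [DecidableEq ι]
    (Atil : Matrix ι ι ℝ) (h0 : ∀ i j, 0 ≤ Atil i j)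
    (N : ℕ) (hN : 0 < N) (ε : ℝ) (hε : 0 < ε)
    (hεN : ∀ i j, ε ≤ (Atil ^ N) i j)
    (M k : ℕ) (hM : 0 < M) (hk : 0 < k) :
    (ε * ∑ c, ∑ d, (Atil ^ M) c d) ^ k ≤ ∑ c, ∑ d, (Atil ^ (k * (M + N))) c d ∧
    ∑ c, ∑ d, (Atil ^ (k * (M + N))) c d ≤ (∑ c, ∑ d, (Atil ^ (M + N)) c d) ^ k := by
  -- nonnegativity of entries of powers
  have hPnn : ∀ (m : ℕ) (i j : ι), 0 ≤ (Atil ^ m) i j := by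
    intro m
    induction m with
    | zero =>
      intro i j
      simp only [pow_zero, Matrix.one_apply]
      split <;> norm_num
    | succ n ih =>
      intro i j
      rw [pow_succ, Matrix.mul_apply]
      exact Finset.sum_nonneg fun d _ => mul_nonneg (ih i d) (h0 d j)
  set S : ℕ → ℝ := fun m => ∑ c, ∑ d, (Atil ^ m) c d with hS
  have hSnn : ∀ m, 0 ≤ S m := fun m =>
    Finset.sum_nonneg fun c _ => Finset.sum_nonneg fun d _ => hPnn m c d
  -- representation of S (a + b)
  have hrepr : ∀ a b : ℕ, S (a + b) = ∑ c, ∑ d, (Atil ^ a) c d * ∑ e, (Atil ^ b) d e := by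
    intro a b
    have e1 : Atil ^ (a + b) = Atil ^ a * Atil ^ b := pow_add Atil a b
    simp only [hS, e1, Matrix.mul_apply]
    refine Finset.sum_congr rfl fun c _ => ?_
    rw [Finset.sum_comm]
    refine Finset.sum_congr rfl fun d _ => ?_
    rw [Finset.mul_sum]
  -- submultiplicativity
  have hsub : ∀ a b : ℕ, S (a + b) ≤ S a * S b := by
    intro a b
    rw [hrepr a b]
    have h2 : ∀ d : ι, (∑ e, (Atil ^ b) d e) ≤ S b := fun d =>
      Finset.single_le_sum (fun i _ => Finset.sum_nonneg fun e _ => hPnn b i e)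
        (Finset.mem_univ d)
    calc ∑ c, ∑ d, (Atil ^ a) c d * ∑ e, (Atil ^ b) d e
        ≤ ∑ c, ∑ d, (Atil ^ a) c d * S b := by
          refine Finset.sum_le_sum fun c _ => Finset.sum_le_sum fun d _ => ?_
          exact mul_le_mul_of_nonneg_left (h2 d) (hPnn a c d)
      _ = S a * S b := by
          simp only [hS]
          rw [Finset.sum_mul]
          exact Finset.sum_congr rfl fun c _ => (Finset.sum_mul _ _ _).symm
  -- supermultiplicativity through N
  have hsup : ∀ a b : ℕ, ε * (S a * S b) ≤ S (a + N + b) := by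
    intro a b
    have hAN : ∀ (c d' : ι), ε * ∑ d, (Atil ^ a) c d ≤ (Atil ^ (a + N)) c d' := by
      intro c d'
      rw [pow_add, Matrix.mul_apply]
      calc ε * ∑ d, (Atil ^ a) c d = ∑ d, (Atil ^ a) c d * ε := by
            rw [Finset.mul_sum]; exact Finset.sum_congr rfl fun d _ => mul_comm _ _
        _ ≤ ∑ d, (Atil ^ a) c d * (Atil ^ N) d d' :=
            Finset.sum_le_sum fun d _ =>
              mul_le_mul_of_nonneg_left (hεN d d') (hPnn a c d)
    rw [hrepr (a + N) b]
    calc ε * (S a * S b)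
        = ∑ c, ∑ d', (ε * ∑ d, (Atil ^ a) c d) * ∑ e, (Atil ^ b) d' e := by
          simp only [hS]
          rw [Finset.sum_mul_sum, Finset.mul_sum]
          refine Finset.sum_congr rfl fun c _ => ?_
          rw [Finset.mul_sum]
          refine Finset.sum_congr rfl fun d' _ => ?_
          ring
      _ ≤ ∑ c, ∑ d', (Atil ^ (a + N)) c d' * ∑ e, (Atil ^ b) d' e := by
          refine Finset.sum_le_sum fun c _ => Finset.sum_le_sum fun d' _ => ?_
          exact mul_le_mul_of_nonneg_right (hAN c d')
            (Finset.sum_nonneg fun e _ => hPnn b d' e)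
  -- base for left inequality: ε * S M ≤ S (M + N)
  have hbase : ε * S M ≤ S (M + N) := by
    have key : ∀ c e : ι, ε * (Atil ^ M) c e ≤ (Atil ^ (M + N)) c e := by
      intro c e
      rw [pow_add, Matrix.mul_apply]
      calc ε * (Atil ^ M) c e = (Atil ^ M) c e * ε := mul_comm _ _
        _ ≤ (Atil ^ M) c e * (Atil ^ N) e e :=
            mul_le_mul_of_nonneg_left (hεN e e) (hPnn M c e)
        _ ≤ ∑ d, (Atil ^ M) c d * (Atil ^ N) d e :=
            Finset.single_le_sum (fun d _ => mul_nonneg (hPnn M c d) (hPnn N d e))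
              (Finset.mem_univ e)
    calc ε * S M = ∑ c, ∑ e, ε * (Atil ^ M) c e := by
          simp only [hS, Finset.mul_sum]
      _ ≤ S (M + N) :=
          Finset.sum_le_sum fun c _ => Finset.sum_le_sum fun e _ => key c e
  constructor
  · -- left inequality by induction on k
    induction k with
    | zero => exact absurd hk (lt_irrefl 0)
    | succ n ih =>
      rcases Nat.eq_zero_or_pos n with hn | hn
      · subst hn; simpa using hbase
      · have ihn := ih hn
        calc (ε * S M) ^ (n + 1) = (ε * S M) * (ε * S M) ^ n := by ring
          _ ≤ (ε * S M) * S (n * (M + N)) :=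
              mul_le_mul_of_nonneg_left ihn (mul_nonneg hε.le (hSnn M))
          _ = ε * (S M * S (n * (M + N))) := by ring
          _ ≤ S (M + N + n * (M + N)) := hsup M (n * (M + N))
          _ = S ((n + 1) * (M + N)) := by congr 1; ring
  · -- right inequality by induction on k
    induction k with
    | zero => exact absurd hk (lt_irrefl 0)
    | succ n ih =>
      rcases Nat.eq_zero_or_pos n with hn | hn
      · subst hn; simp
      · have ihn := ih hn
        calc S ((n + 1) * (M + N)) = S (n * (M + N) + (M + N)) := by congr 1; ring
          _ ≤ S (n * (M + N)) * S (M + N) := hsub _ _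
          _ ≤ S (M + N) ^ n * S (M + N) :=
              mul_le_mul_of_nonneg_right ihn (hSnn (M + N))
          _ = S (M + N) ^ (n + 1) := by ring
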